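/- For any quantale Q, the categories of left Q-modules and right Q-modules have the strong amalgamation property: given Q-modules M, N, P and injective homomorphisms f: P → M, g: P → N, there exist a Q-module R and injective homomorphisms f': M → R, g': N → R with f' ∘ f = g' ∘ g and f'[M] ∩ g'[N] = (f' ∘ f)[P]. -/

import Mathlib

/-- A (unital) quantale: a sup-lattice with a monoid multiplication distributing
over arbitrary joins on both sides. -/
class Quantale' (Q : Type u) extends CompleteLattice Q, Monoid Q where
  mul_sSup : ∀ (a : Q) (s : Set Q), a * SupSet.sSup s = ⨆ b ∈ s, a * b
  sSup_mul : ∀ (s : Set Q) (a : Q), SupSet.sSup s * a = ⨆ b ∈ s, b * a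

/-- A left module over a quantale `Q`: a sup-lattice with an action of `Q`
distributing over arbitrary joins in both arguments and compatible with the
monoid structure of `Q`. -/
class QModule (Q : Type u) [Quantale' Q] (M : Type v) [CompleteLattice M] extends SMul Q M where
  mul_smul' : ∀ (a b : Q) (m : M), (a * b) • m = a • b • m
  smul_sSup : ∀ (a : Q) (s : Set M), a • sSup s = ⨆ m ∈ s, a • m
  sSup_smul : ∀ (s : Set Q) (m : M), (sSup s : Q) • m = ⨆ a ∈ s, a • m
  one_smul' : ∀ m : M, (1 : Q) • m = m

/-- The residual `q \⋆ m = ⋁ {n | q ⋆ n ≤ m}`. -/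
def lres {Q : Type u} [Quantale' Q] {M : Type v} [CompleteLattice M] [QModule Q M]
    (q : Q) (m : M) : M :=
  sSup {n : M | q • n ≤ m}

/-- The residual `m /⋆ n = ⋁ {q | q ⋆ n ≤ m}`. -/
def rres {Q : Type u} [Quantale' Q] {M : Type v} [CompleteLattice M] [QModule Q M]
    (m n : M) : Q :=
  sSup {q : Q | q • n ≤ m}

/-- The left residual `q \ r = ⋁ {s | q · s ≤ r}` of the quantale multiplication. -/
def qlres {Q : Type u} [Quantale' Q] (q r : Q) : Q :=
  sSup {s : Q | q * s ≤ r}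

/-- A homomorphism of `Q`-modules: a map preserving arbitrary joins and the scalar action. -/
def IsQModHom (Q : Type u) [Quantale' Q] {A : Type v} {B : Type w}
    [CompleteLattice A] [CompleteLattice B] [QModule Q A] [QModule Q B] (f : A → B) : Prop :=
  (∀ S : Set A, f (sSup S) = ⨆ x ∈ S, f x) ∧ ∀ (q : Q) (x : A), f (q • x) = q • f x

/-!
The amalgam is cut out of `M × N` by a closure operator whose closed elements are the pairs
`(m, n)` with `f p ≤ m ↔ g p ≤ n` for every `p`. These pairs are closed under meets and under the
residuals `q \⋆ ·`, so the closure is a nucleus compatible with the action and its closed elements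
form a `Q`-module. The closure of `(m, ⊥)` is `(m, g (⋁ {p | f p ≤ m}))`, which makes
`m ↦ closure (m, ⊥)` injective; and if `closure (m, ⊥) = closure (⊥, n)`, comparing first
coordinates gives `m = f (⋁ {p | g p ≤ n})`, which is strong amalgamation.
-/

namespace QModule

variable {Q : Type u} [Quantale' Q] {M : Type v} [CompleteLattice M] [QModule Q M]

theorem smul_sup (q : Q) (x y : M) : q • (x ⊔ y) = q • x ⊔ q • y := by
  rw [← sSup_pair, smul_sSup, iSup_pair]

theorem smul_mono (q : Q) : Monotone fun m : M => q • m := fun x y h => show q • x ≤ q • y by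
  rw [← sup_eq_right.2 h, smul_sup]
  exact le_sup_left

theorem gc_smul_lres (q : Q) : GaloisConnection (fun m : M => q • m) (lres q) := fun x m =>
  ⟨fun h => le_sSup h, fun h => (smul_mono q h).trans <| show q • lres q m ≤ m by
    rw [lres, smul_sSup]
    exact iSup₂_le fun _ hn => hn⟩

theorem smul_le_iff_le_lres (q : Q) {x m : M} : q • x ≤ m ↔ x ≤ lres q m :=
  gc_smul_lres q x m

theorem smul_bot (q : Q) : q • (⊥ : M) = ⊥ := (gc_smul_lres q).l_bot

end QModule

open QModule

section Prod

variable {Q : Type u} [Quantale' Q] {M : Type v} {N : Type w}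
  [CompleteLattice M] [CompleteLattice N] [QModule Q M] [QModule Q N]

instance Prod.instQModule : QModule Q (M × N) where
  mul_smul' a b m := Prod.ext (mul_smul' a b m.1) (mul_smul' a b m.2)
  one_smul' m := Prod.ext (one_smul' m.1) (one_smul' m.2)
  smul_sSup a s := by
    ext
    · rw [Prod.smul_fst, Prod.fst_sSup, smul_sSup, iSup_image, Prod.fst_iSup]
      simp only [Prod.fst_iSup, Prod.smul_fst]
    · rw [Prod.smul_snd, Prod.snd_sSup, smul_sSup, iSup_image, Prod.snd_iSup]
      simp only [Prod.snd_iSup, Prod.smul_snd]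
  sSup_smul s m := by
    ext <;> simp [Prod.fst_iSup, Prod.snd_iSup, sSup_smul]

theorem Prod.lres_eq (q : Q) (x : M × N) : lres q x = (lres q x.1, lres q x.2) :=
  eq_of_forall_le_iff fun z => by
    rw [← smul_le_iff_le_lres, Prod.le_def, Prod.le_def, ← smul_le_iff_le_lres,
      ← smul_le_iff_le_lres]
    rfl

end Prod

namespace IsQModHom

variable {Q : Type u} [Quantale' Q] {A : Type v} {B : Type w}
  [CompleteLattice A] [CompleteLattice B] [QModule Q A] [QModule Q B] {f : A → B}

theorem map_sup (hf : IsQModHom Q f) (x y : A) : f (x ⊔ y) = f x ⊔ f y := by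
  rw [← sSup_pair, hf.1, iSup_pair]

theorem monotone (hf : IsQModHom Q f) : Monotone f := fun x y h => by
  rw [← sup_eq_right.2 h, hf.map_sup]
  exact le_sup_left

theorem map_le_map_iff (hf : IsQModHom Q f) (hfi : Function.Injective f) {x y : A} :
    f x ≤ f y ↔ x ≤ y :=
  ⟨fun h => sup_eq_right.1 (hfi (by rw [hf.map_sup, sup_eq_right.2 h])), fun h => hf.monotone h⟩

theorem map_sSup_le (hf : IsQModHom Q f) {S : Set A} {b : B} (h : ∀ x ∈ S, f x ≤ b) :
    f (sSup S) ≤ b := by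
  rw [hf.1]
  exact iSup₂_le h

theorem sSup_setOf_map_le_map (hf : IsQModHom Q f) (hfi : Function.Injective f) (x : A) :
    sSup {y | f y ≤ f x} = x := by
  simp_rw [hf.map_le_map_iff hfi]
  exact isLUB_Iic.sSup_eq

theorem comp {C : Type*} [CompleteLattice C] [QModule Q C] {g : B → C}
    (hg : IsQModHom Q g) (hf : IsQModHom Q f) : IsQModHom Q (g ∘ f) :=
  ⟨fun S => by simp only [Function.comp_apply, hf.1, hg.1, ← sSup_image, Set.image_image],
    fun q x => by simp only [Function.comp_apply, hf.2, hg.2]⟩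

theorem inl : IsQModHom Q fun a : A => (a, (⊥ : B)) :=
  ⟨fun S => by ext <;> simp [Prod.fst_iSup, Prod.snd_iSup, sSup_eq_iSup],
    fun q a => by ext <;> simp [smul_bot]⟩

theorem inr : IsQModHom Q fun b : B => ((⊥ : A), b) :=
  ⟨fun S => by ext <;> simp [Prod.fst_iSup, Prod.snd_iSup, sSup_eq_iSup],
    fun q b => by ext <;> simp [smul_bot]⟩

end IsQModHom

namespace ClosureOperator

section CompleteLattice

variable {α : Type v} [CompleteLattice α] (c : ClosureOperator α)

instance : CompleteLattice c.Closeds := c.gi.liftCompleteLattice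

theorem toCloseds_sSup (S : Set α) : c.toCloseds (sSup S) = ⨆ x ∈ S, c.toCloseds x :=
  c.gi.gc.l_sSup

end CompleteLattice

class IsQNucleus (Q : Type u) [Quantale' Q] {A : Type v} [CompleteLattice A] [QModule Q A]
    (c : ClosureOperator A) : Prop where
  smul_closure_le : ∀ (q : Q) (x : A), q • c x ≤ c (q • x)

variable {Q : Type u} [Quantale' Q] {A : Type v} [CompleteLattice A] [QModule Q A]
  (c : ClosureOperator A)

theorem IsQNucleus.of_isClosed_lres (h : ∀ (q : Q) (y : A), c.IsClosed y → c.IsClosed (lres q y)) :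
    c.IsQNucleus Q :=
  ⟨fun q _ => (gc_smul_lres q).l_le <|
    closure_min ((gc_smul_lres q).le_u (c.le_closure _)) (h q _ (c.isClosed_closure _))⟩

variable [c.IsQNucleus Q]

theorem closure_smul_closure (q : Q) (x : A) : c (q • c x) = c (q • x) :=
  le_antisymm (le_closure_iff.1 (IsQNucleus.smul_closure_le q x))
    (c.monotone (smul_mono q (c.le_closure x)))

instance : SMul Q c.Closeds := ⟨fun q x => c.toCloseds (q • (x : A))⟩

theorem toCloseds_smul (q : Q) (x : A) : c.toCloseds (q • x) = q • c.toCloseds x :=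
  Subtype.ext (c.closure_smul_closure q x).symm

instance : QModule Q c.Closeds where
  mul_smul' a b x := Subtype.ext <| by
    change c ((a * b) • (x : A)) = c (a • c (b • (x : A)))
    rw [mul_smul', closure_smul_closure]
  one_smul' x := Subtype.ext <| by
    change c ((1 : Q) • (x : A)) = x
    rw [one_smul', x.2.closure_eq]
  smul_sSup a S := by
    change a • c.toCloseds (sSup (Subtype.val '' S)) = _
    rw [← toCloseds_smul, smul_sSup, iSup_image, ← sSup_image, toCloseds_sSup, iSup_image]
    rfl
  sSup_smul s x := by
    change c.toCloseds ((sSup s) • (x : A)) = _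
    rw [sSup_smul, ← sSup_image, toCloseds_sSup, iSup_image]
    rfl

end ClosureOperator

theorem IsQModHom.toCloseds {Q : Type u} [Quantale' Q] {A : Type v} [CompleteLattice A]
    [QModule Q A] (c : ClosureOperator A) [c.IsQNucleus Q] : IsQModHom Q c.toCloseds :=
  ⟨c.toCloseds_sSup, c.toCloseds_smul⟩

section Amalgam

variable {Q : Type u} [Quantale' Q] {M N P : Type*}
  [CompleteLattice M] [CompleteLattice N] [CompleteLattice P]
  [QModule Q M] [QModule Q N] [QModule Q P] {f : P → M} {g : P → N}

variable (f g) in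
/-- The closed pairs are exactly those that do not separate `(f p, ⊥)` from `(⊥, g p)`, so the
closed elements form the quotient of `M × N` by the module congruence generated by
`(f p, ⊥) ~ (⊥, g p)`. -/
def amalgClosure : ClosureOperator (M × N) :=
  .ofCompletePred (fun x => ∀ p, f p ≤ x.1 ↔ g p ≤ x.2) fun S hS p => by
    simp only [Prod.fst_sInf, Prod.snd_sInf, le_sInf_iff, Set.forall_mem_image]
    exact ⟨fun h x hx => (hS x hx p).1 (h hx), fun h x hx => (hS x hx p).2 (h hx)⟩

theorem isQNucleus_amalgClosure (hf : IsQModHom Q f) (hg : IsQModHom Q g) :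
    (amalgClosure f g).IsQNucleus Q :=
  .of_isClosed_lres _ fun q y hy p => by
    rw [Prod.lres_eq, ← smul_le_iff_le_lres, ← smul_le_iff_le_lres, ← hf.2, ← hg.2]
    exact hy (q • p)

theorem amalgClosure_mk_bot (hf : IsQModHom Q f) (hg : IsQModHom Q g)
    (hgi : Function.Injective g) (m : M) :
    amalgClosure f g (m, ⊥) = (m, g (sSup {p | f p ≤ m})) := by
  have hclosed : (amalgClosure f g).IsClosed (m, g (sSup {p | f p ≤ m})) := fun p => by
    change f p ≤ m ↔ g p ≤ g (sSup _)
    rw [hg.map_le_map_iff hgi]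
    exact ⟨fun h => le_sSup h, fun h => (hf.monotone h).trans (hf.map_sSup_le fun _ hp => hp)⟩
  have hle := (amalgClosure f g).le_closure (m, ⊥)
  refine le_antisymm (ClosureOperator.closure_min ⟨le_rfl, bot_le⟩ hclosed) ⟨hle.1, ?_⟩
  exact hg.map_sSup_le fun p hp => ((amalgClosure f g).isClosed_closure _ p).1 (hp.trans hle.1)

theorem amalgClosure_bot_mk (hf : IsQModHom Q f) (hg : IsQModHom Q g)
    (hfi : Function.Injective f) (n : N) :
    amalgClosure f g (⊥, n) = (f (sSup {p | g p ≤ n}), n) := by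
  have hclosed : (amalgClosure f g).IsClosed (f (sSup {p | g p ≤ n}), n) := fun p => by
    change f p ≤ f (sSup _) ↔ g p ≤ n
    rw [hf.map_le_map_iff hfi]
    exact ⟨fun h => (hg.monotone h).trans (hg.map_sSup_le fun _ hp => hp), fun h => le_sSup h⟩
  have hle := (amalgClosure f g).le_closure (⊥, n)
  refine le_antisymm (ClosureOperator.closure_min ⟨bot_le, le_rfl⟩ hclosed) ⟨?_, hle.2⟩
  exact hf.map_sSup_le fun p hp => ((amalgClosure f g).isClosed_closure _ p).2 (hp.trans hle.2)

end Amalgam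

/-- Strong amalgamation property for the category of `Q`-modules: an amalgam
`(P, f, M, g, N)` of injective homomorphisms can be completed by injective
homomorphisms `f' : M → R`, `g' : N → R` with `f' ∘ f = g' ∘ g` and
`f'[M] ∩ g'[N] = (f' ∘ f)[P]`. -/
theorem stmt_19 {Q : Type u} [Quantale' Q] (M N P : Type u)
    [CompleteLattice M] [CompleteLattice N] [CompleteLattice P]
    [QModule Q M] [QModule Q N] [QModule Q P]
    (f : P → M) (g : P → N)
    (hf : IsQModHom Q f) (hg : IsQModHom Q g)
    (hfi : Function.Injective f) (hgi : Function.Injective g) :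
    ∃ (R : Type u) (_ : CompleteLattice R) (_ : QModule Q R) (f' : M → R) (g' : N → R),
      IsQModHom Q f' ∧ IsQModHom Q g' ∧
        Function.Injective f' ∧ Function.Injective g' ∧
        f' ∘ f = g' ∘ g ∧
        Set.range f' ∩ Set.range g' = Set.range (f' ∘ f) := by
  set c := amalgClosure f g
  have := isQNucleus_amalgClosure hf hg
  have hinl (m : M) : (c.toCloseds (m, ⊥) : M × N) = (m, g (sSup {p | f p ≤ m})) :=
    amalgClosure_mk_bot hf hg hgi m
  have hinr (n : N) : (c.toCloseds (⊥, n) : M × N) = (f (sSup {p | g p ≤ n}), n) :=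
    amalgClosure_bot_mk hf hg hfi n
  have hcomm (p : P) : c.toCloseds (f p, ⊥) = c.toCloseds (⊥, g p) := Subtype.ext <| by
    rw [hinl, hinr, hf.sSup_setOf_map_le_map hfi, hg.sSup_setOf_map_le_map hgi]
  refine ⟨c.Closeds, inferInstance, inferInstance, fun m => c.toCloseds (m, ⊥),
    fun n => c.toCloseds (⊥, n), (IsQModHom.toCloseds c).comp IsQModHom.inl,
    (IsQModHom.toCloseds c).comp IsQModHom.inr, fun m₁ m₂ h => ?_, fun n₁ n₂ h => ?_,
    funext hcomm, Set.ext fun x => ⟨?_, ?_⟩⟩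
  · simpa [hinl] using congrArg (fun x : c.Closeds => (x : M × N).1) h
  · simpa [hinr] using congrArg (fun x : c.Closeds => (x : M × N).2) h
  · rintro ⟨⟨m, rfl⟩, n, hn⟩
    have hm : f (sSup {p | g p ≤ n}) = m := by
      simpa [hinl, hinr] using congrArg (fun x : c.Closeds => (x : M × N).1) hn
    exact ⟨sSup {p | g p ≤ n}, by simp [hm]⟩
  · rintro ⟨p, rfl⟩
    exact ⟨⟨f p, rfl⟩, g p, (hcomm p).symm⟩
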